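/- arXiv:2103.04543 — 4 statements merged into one kernel-verified Lean document; each statement's English description precedes it below -/
import Mathlib

section
/- Median/representative set lemma: Let S and T be finite disjoint sets with a linear order ≺ on S ∪ T placing all of S before all of T, and let R ⊆ S × T satisfy the subinterval property: if (s, t) ∈ R and s ⪯ s' ≺ t' ⪯ t then (s', t') ∈ R. Let y : R → ℝ_{≥0} with total mass γ = ∑_{(s,t)∈R} y(s,t) > 0. Define s* as the ≺-maximum s ∈ S such that ∑_{s' ⪰ s} ∑_{t : (s',t)∈R} y(s',t) ≥ γ/2, and t* as the ≺-minimum t ∈ T such that ∑_{t' ⪯ t} ∑_{s: (s,t')∈R} y(s,t') ≥ γ/2. Then S̃ × T̃ ⊆ R, where S̃ = {s ∈ S : s ⪰ s*} and T̃ = {t ∈ T : t ⪯ t*}. -/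
/-!
Fix `s ⪰ s*` and `t ⪯ t*`. Every element of `S` after `s` lies after `s*`, so the pairs of `R`
starting after `s` carry less than half of the mass; likewise the pairs of `R` ending before `t`.
Hence some pair `(s₀, t₀) ∈ R` with `s₀ ⪯ s` and `t ⪯ t₀` has positive mass, and the subinterval
property gives `(s, t) ∈ R`.
-/

open Finset OrderDual

theorem exists_mem_and_of_sum_filter_not_lt_half {ι : Type*} (R : Finset ι) (y : ι → ℝ)
    (hy : ∀ p ∈ R, 0 ≤ y p) (P Q : ι → Prop) [DecidablePred P] [DecidablePred Q]
    (hP : ∑ p ∈ R with ¬P p, y p < (∑ p ∈ R, y p) / 2)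
    (hQ : ∑ p ∈ R with ¬Q p, y p < (∑ p ∈ R, y p) / 2) :
    ∃ p ∈ R, P p ∧ Q p := by
  by_contra! hPQ
  have hsubset : R.filter P ⊆ R.filter (¬Q ·) := fun p hp => by
    rw [mem_filter] at hp ⊢
    exact ⟨hp.1, hPQ p hp.1 hp.2⟩
  have hle := sum_le_sum_of_subset_of_nonneg hsubset fun p hp _ => hy p (mem_filter.1 hp).1
  have hsplit := sum_filter_add_sum_filter_not R P y
  linarith

theorem sum_filter_lt_apply_lt {ι α : Type*} [LinearOrder α] (R : Finset ι) (key : ι → α)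
    (y : ι → ℝ) {a : α} {c : ℝ} (hc : 0 < c)
    (h : ∀ p ∈ R, a < key p → ∑ q ∈ R with key p ≤ key q, y q < c) :
    ∑ q ∈ R with a < key q, y q < c := by
  rcases (R.filter (a < key ·)).eq_empty_or_nonempty with hempty | hne
  · rwa [hempty, sum_empty]
  obtain ⟨p, hp, hmin⟩ := exists_min_image _ key hne
  rw [mem_filter] at hp
  have hfilter : R.filter (a < key ·) = R.filter (key p ≤ key ·) :=
    filter_congr fun q hq =>
      ⟨fun haq => hmin q (mem_filter.2 ⟨hq, haq⟩), fun hpq => hp.2.trans_le hpq⟩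
  rw [hfilter]
  exact h p hp.1 hp.2

theorem stmt8_general {V : Type*} [LinearOrder V] (S T : Finset V)
    (R : Finset (V × V)) (hR : ∀ p ∈ R, p.1 ∈ S ∧ p.2 ∈ T)
    (hsub : ∀ p ∈ R, ∀ s' ∈ S, ∀ t' ∈ T, p.1 ≤ s' → t' ≤ p.2 → (s', t') ∈ R)
    (y : V × V → ℝ) (hy : ∀ p ∈ R, 0 ≤ y p)
    (γ : ℝ) (hγ : γ = ∑ p ∈ R, y p) (hpos : 0 < γ)
    (sstar tstar : V)
    (hsmax : ∀ s ∈ S, sstar < s →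
      (∑ p ∈ R.filter (fun p => s ≤ p.1), y p) < γ / 2)
    (htmin : ∀ t ∈ T, t < tstar →
      (∑ p ∈ R.filter (fun p => p.2 ≤ t), y p) < γ / 2) :
    ∀ s ∈ S, sstar ≤ s → ∀ t ∈ T, t ≤ tstar → (s, t) ∈ R := by
  intro s hsS hss t htT htt
  have hlate : ∑ p ∈ R with s < p.1, y p < γ / 2 :=
    sum_filter_lt_apply_lt R Prod.fst y (half_pos hpos) fun p hp hsp =>
      hsmax p.1 (hR p hp).1 (hss.trans_lt hsp)
  have hearly : ∑ p ∈ R with p.2 < t, y p < γ / 2 :=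
    sum_filter_lt_apply_lt (α := Vᵒᵈ) R (fun p => toDual p.2) y (half_pos hpos) fun p hp htp =>
      htmin p.2 (hR p hp).2 ((show p.2 < t from htp).trans_le htt)
  obtain ⟨p, hp, hps, htp⟩ := exists_mem_and_of_sum_filter_not_lt_half R y hy
    (·.1 ≤ s) (t ≤ ·.2) (by simpa only [not_le, hγ] using hlate)
    (by simpa only [not_le, hγ] using hearly)
  exact hsub p hp s hsS t htT hps htp

/-- Median/representative set lemma: let `S, T` be finite disjoint sets with
all of `S` before all of `T` in a linear order, `R ⊆ S × T` with the
subinterval property, and `y : R → ℝ≥0` of total mass `γ > 0`. If `sstar` is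
the maximum element of `S` whose suffix mass is at least `γ/2` and `tstar` is
the minimum element of `T` whose prefix mass is at least `γ/2`, then
`S̃ × T̃ ⊆ R` for `S̃ = {s ∈ S : s ⪰ sstar}` and `T̃ = {t ∈ T : t ⪯ tstar}`. -/
theorem stmt8 {V : Type*} [LinearOrder V] (S T : Finset V)
    (hST : ∀ s ∈ S, ∀ t ∈ T, s < t)
    (R : Finset (V × V)) (hR : ∀ p ∈ R, p.1 ∈ S ∧ p.2 ∈ T)
    (hsub : ∀ p ∈ R, ∀ s' ∈ S, ∀ t' ∈ T, p.1 ≤ s' → t' ≤ p.2 → (s', t') ∈ R)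
    (y : V × V → ℝ) (hy : ∀ p ∈ R, 0 ≤ y p)
    (γ : ℝ) (hγ : γ = ∑ p ∈ R, y p) (hpos : 0 < γ)
    (sstar tstar : V) (hs : sstar ∈ S) (ht : tstar ∈ T)
    (hsmass : γ / 2 ≤ ∑ p ∈ R.filter (fun p => sstar ≤ p.1), y p)
    (hsmax : ∀ s ∈ S, sstar < s →
      (∑ p ∈ R.filter (fun p => s ≤ p.1), y p) < γ / 2)
    (htmass : γ / 2 ≤ ∑ p ∈ R.filter (fun p => p.2 ≤ tstar), y p)
    (htmin : ∀ t ∈ T, t < tstar →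
      (∑ p ∈ R.filter (fun p => p.2 ≤ t), y p) < γ / 2) :
    ∀ s ∈ S, sstar ≤ s → ∀ t ∈ T, t ≤ tstar → (s, t) ∈ R :=
  stmt8_general S T R hR hsub y hy γ hγ hpos sstar tstar hsmax htmin
end

section
/- Primal-dual rate inequality for online covering: Suppose during the processing of covering constraint i (with coefficients a_{ij} ≥ 0), each primal variable is maintained as x_j = (α/(2n c_j))·exp((ln(2n)/c_j)·∑_k a_{kj} y_k) while the dual variable y_i increases, and the update stops while ∑_j a_{ij} x_j ≤ 2. Then at all times during the update, dX/dy_i = ∑_j c_j · dx_j/dy_i = ln(2n) · ∑_j a_{ij} x_j ≤ 2 ln(2n) = 2 ln(2n) · dY/dy_i, where X = ∑_j c_j x_j and Y = ∑_k y_k. -/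
open Real Finset

lemma hasDerivAt_mul_div_mul_exp_div (c A L s a y₀ : ℝ) :
    HasDerivAt (fun y => c * (A / c * exp (L / c * (s + a * y))))
      (L * a * (A / c * exp (L / c * (s + a * y₀)))) y₀ := by
  -- for `c = 0` both sides vanish, as `A / 0 = 0`
  rcases eq_or_ne c 0 with rfl | hc
  · simpa using hasDerivAt_const y₀ (0 : ℝ)
  have hlin : HasDerivAt (fun y => L / c * (s + a * y)) (L / c * a) y₀ := by
    simpa using (((hasDerivAt_id y₀).const_mul a).const_add s).const_mul (L / c)
  refine ((hlin.exp.const_mul (A / c)).const_mul c).congr_deriv ?_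
  field_simp

lemma log_two_mul_natCast_nonneg (n : ℕ) : 0 ≤ log (2 * n) := by
  exact_mod_cast log_natCast_nonneg (2 * n)

theorem stmt13_general {ι : Type*} (J : Finset ι) (n : ℕ)
    (c : ι → ℝ)
    (α : ℝ)
    (a S : ι → ℝ)
    (x : ι → ℝ → ℝ)
    (hx : ∀ j ∈ J, ∀ y : ℝ, x j y =
      α / (2 * n * c j) * Real.exp (Real.log (2 * n) / c j * (S j + a j * y)))
    (y₀ : ℝ) (hstop : (∑ j ∈ J, a j * x j y₀) ≤ 2) :
    HasDerivAt (fun y => ∑ j ∈ J, c j * x j y)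
      (Real.log (2 * n) * ∑ j ∈ J, a j * x j y₀) y₀ ∧
    Real.log (2 * n) * (∑ j ∈ J, a j * x j y₀) ≤ 2 * Real.log (2 * n) := by
  refine ⟨?_, ?_⟩
  · rw [mul_sum]
    refine HasDerivAt.fun_sum fun j hj => ?_
    have hxj : x j = fun y => α / (2 * n) / c j *
        exp (log (2 * n) / c j * (S j + a j * y)) := by
      ext y
      rw [hx j hj, div_div]
    rw [hxj, ← mul_assoc]
    exact hasDerivAt_mul_div_mul_exp_div _ _ _ _ _ _
  · exact (mul_le_mul_of_nonneg_left hstop (log_two_mul_natCast_nonneg n)).trans_eq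
      (mul_comm _ _)

/-- Primal-dual rate inequality for online covering: if each primal variable
is maintained as `x j y = (α/(2n c j)) · exp((ln(2n)/c j)·(S j + a j · y))`
as the dual variable `y` increases (where `S j` collects the contributions of
the previously fixed dual variables), and the update stops while
`∑_j a j · x j y₀ ≤ 2`, then the covering objective `X = ∑_j c j · x j`
satisfies `dX/dy = ln(2n) · ∑_j a j · x j y₀ ≤ 2 ln(2n)` at `y₀`. -/
theorem stmt13 {ι : Type*} (J : Finset ι) (n : ℕ) (hn : 1 ≤ n)
    (c : ι → ℝ) (hc : ∀ j ∈ J, 0 < c j)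
    (α : ℝ) (hα : 0 < α)
    (a S : ι → ℝ) (ha : ∀ j ∈ J, 0 ≤ a j)
    (x : ι → ℝ → ℝ)
    (hx : ∀ j ∈ J, ∀ y : ℝ, x j y =
      α / (2 * n * c j) * Real.exp (Real.log (2 * n) / c j * (S j + a j * y)))
    (y₀ : ℝ) (hstop : (∑ j ∈ J, a j * x j y₀) ≤ 2) :
    HasDerivAt (fun y => ∑ j ∈ J, c j * x j y)
      (Real.log (2 * n) * ∑ j ∈ J, a j * x j y₀) y₀ ∧
    Real.log (2 * n) * (∑ j ∈ J, a j * x j y₀) ≤ 2 * Real.log (2 * n) :=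
  stmt13_general J n c α a S x hx y₀ hstop
end

section
/- Packing rate inequality: Suppose during the update of dual variable y_i, each x_j satisfies x_j ≥ (1/(n a_j^max))·(exp((B/(3c_j))·∑_k a_{kj} y_k) − 1), that ∑_j a_{ij} x_j ≤ 2 throughout the update, and that a_{ij} ≤ a_j^max for all j. Then dX/dy_i = ∑_j c_j dx_j/dy_i ≤ (B/3)·(∑_j a_{ij} x_j + ∑_j a_{ij}/(n a_j^max)) ≤ (B/3)·(2 + 1) = B, where X = ∑_j c_j x_j. Hence X(i) ≤ B · Y(i) for Y(i) = ∑_k y_k. -/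
open Finset

/-- The derivative is written back in terms of the function itself, `f' = β α (f + K)`: this is
how the current load `∑ a j * x j` enters the rate of the primal objective. -/
theorem hasDerivAt_mul_exp_sub_one (K β s α y : ℝ) :
    HasDerivAt (fun y => K * (Real.exp (β * (s + α * y)) - 1))
      (β * α * (K * (Real.exp (β * (s + α * y)) - 1) + K)) y := by
  have hlin : HasDerivAt (fun y => β * (s + α * y)) (β * α) y := by
    simpa using (((hasDerivAt_id y).const_mul α).const_add s).const_mul β
  refine ((hlin.exp.sub_const 1).const_mul K).congr_deriv ?_
  ring

theorem stmt16_general {ι : Type*} (J : Finset ι) (n : ℕ) (hn : 1 ≤ n)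
    (B : ℝ) (hB : 0 < B)
    (c amax : ι → ℝ) (hc : ∀ j ∈ J, 0 < c j) (hamax : ∀ j ∈ J, 0 < amax j)
    (a S : ι → ℝ)
    (x : ι → ℝ → ℝ)
    (hx : ∀ j ∈ J, ∀ y : ℝ, x j y =
      1 / (n * amax j) * (Real.exp (B / (3 * c j) * (S j + a j * y)) - 1))
    (y₀ : ℝ)
    (hstop : (∑ j ∈ J, a j * x j y₀) ≤ 2)
    (hratio : (∑ j ∈ J, a j / (n * amax j)) ≤ 1) :
    HasDerivAt (fun y => ∑ j ∈ J, c j * x j y)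
      (B / 3 * ((∑ j ∈ J, a j * x j y₀) + ∑ j ∈ J, a j / (n * amax j))) y₀ ∧
    B / 3 * ((∑ j ∈ J, a j * x j y₀) + ∑ j ∈ J, a j / (n * amax j)) ≤ B := by
  have hterm : ∀ j ∈ J, HasDerivAt (fun y => c j * x j y)
      (B / 3 * (a j * x j y₀) + B / 3 * (a j / (n * amax j))) y₀ := by
    intro j hj
    have hcj := (hc j hj).ne'
    have hden : (n : ℝ) * amax j ≠ 0 := by
      have : (0 : ℝ) < n := by exact_mod_cast hn
      exact (mul_pos this (hamax j hj)).ne'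
    have hderiv := (hasDerivAt_mul_exp_sub_one (1 / (n * amax j)) (B / (3 * c j)) (S j) (a j)
      y₀).const_mul (c j)
    simp only [hx j hj]
    refine hderiv.congr_deriv ?_
    field_simp
  refine ⟨(HasDerivAt.fun_sum hterm).congr_deriv ?_, ?_⟩
  · rw [sum_add_distrib, ← mul_sum, ← mul_sum, mul_add]
  · calc B / 3 * ((∑ j ∈ J, a j * x j y₀) + ∑ j ∈ J, a j / (n * amax j))
        ≤ B / 3 * (2 + 1) := by gcongr
      _ = B := by ring

/-- Packing rate inequality: if each primal variable is maintained as
`x j y = (1/(n·amax j)) · (exp((B/(3 c j))·(S j + a j · y)) − 1)` while the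
dual variable `y` increases, with `∑_j a j · x j y₀ ≤ 2` throughout the update
and `∑_j a j/(n · amax j) ≤ 1`, then the primal objective `X = ∑_j c j · x j`
has derivative `D` at `y₀` with
`D = (B/3)·(∑_j a j · x j y₀ + ∑_j a j/(n·amax j)) ≤ (B/3)·(2+1) = B`. -/
theorem stmt16 {ι : Type*} (J : Finset ι) (n : ℕ) (hn : 1 ≤ n)
    (B : ℝ) (hB : 0 < B)
    (c amax : ι → ℝ) (hc : ∀ j ∈ J, 0 < c j) (hamax : ∀ j ∈ J, 0 < amax j)
    (a S : ι → ℝ) (ha : ∀ j ∈ J, 0 ≤ a j) (haa : ∀ j ∈ J, a j ≤ amax j)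
    (x : ι → ℝ → ℝ)
    (hx : ∀ j ∈ J, ∀ y : ℝ, x j y =
      1 / (n * amax j) * (Real.exp (B / (3 * c j) * (S j + a j * y)) - 1))
    (y₀ : ℝ)
    (hstop : (∑ j ∈ J, a j * x j y₀) ≤ 2)
    (hratio : (∑ j ∈ J, a j / (n * amax j)) ≤ 1) :
    HasDerivAt (fun y => ∑ j ∈ J, c j * x j y)
      (B / 3 * ((∑ j ∈ J, a j * x j y₀) + ∑ j ∈ J, a j / (n * amax j))) y₀ ∧
    B / 3 * ((∑ j ∈ J, a j * x j y₀) + ∑ j ∈ J, a j / (n * amax j)) ≤ B :=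
  stmt16_general J n hn B hB c amax hc hamax a S x hx y₀ hstop hratio
end

section
/- Competitive ratio with maximum distance d: Let OPT ≥ 1 and set T = d^{−4/3} n^{4/3}, t = d^{1/3} n^{2/3} with 1 ≤ d ≤ n. If k < T, then the greedy cost d·k satisfies d·k/OPT ≤ d√k ≤ d√T = d^{1/3} n^{2/3} (using OPT ≥ √k). If k ≥ T, then OPT ≥ √T = d^{−2/3} n^{2/3} and (t·OPT + n²/t)/OPT ≤ t + n²/(t·OPT) ≤ 2 d^{1/3} n^{2/3}. -/
/-!
With `s = d^{-2/3} n^{2/3} = √T` and `t = d^{1/3} n^{2/3} = d·s`, everything reduces to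
`OPT ≥ √k` and the identity `n² = t²·s`. Below the threshold, `d·k/OPT ≤ d·√k < d·s = t`;
above it, `OPT ≥ √k ≥ s`, so `n²/(t·OPT) ≤ n²/(t·s) = t`.
-/

namespace Real

theorem sqrt_rpow_neg_four_thirds_mul_rpow_four_thirds {x y : ℝ} (hx : 0 ≤ x) (hy : 0 ≤ y) :
    √(x ^ (-(4 : ℝ) / 3) * y ^ ((4 : ℝ) / 3)) = x ^ (-(2 : ℝ) / 3) * y ^ ((2 : ℝ) / 3) := by
  rw [sqrt_eq_rpow, mul_rpow (by positivity) (by positivity), ← rpow_mul hx, ← rpow_mul hy]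
  norm_num

theorem mul_rpow_neg_two_thirds_mul {x : ℝ} (hx : 0 ≤ x) (y : ℝ) :
    x * (x ^ (-(2 : ℝ) / 3) * y ^ ((2 : ℝ) / 3)) = x ^ ((1 : ℝ) / 3) * y ^ ((2 : ℝ) / 3) := by
  have hx' : x * x ^ (-(2 : ℝ) / 3) = x ^ ((1 : ℝ) / 3) :=
    calc x * x ^ (-(2 : ℝ) / 3) = x ^ (1 + -(2 : ℝ) / 3) := by
          rw [rpow_add' hx (by norm_num), rpow_one]
      _ = x ^ ((1 : ℝ) / 3) := by norm_num
  rw [← mul_assoc, hx']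

theorem sq_div_rpow_one_third_mul_rpow_neg_two_thirds {x y : ℝ} (hx : 0 < x) (hy : 0 < y) :
    y ^ 2 / (x ^ ((1 : ℝ) / 3) * y ^ ((2 : ℝ) / 3) * (x ^ (-(2 : ℝ) / 3) * y ^ ((2 : ℝ) / 3)))
      = x ^ ((1 : ℝ) / 3) * y ^ ((2 : ℝ) / 3) := by
  rw [div_eq_iff (by positivity), ← rpow_natCast]
  calc y ^ ((2 : ℕ) : ℝ)
      = x ^ ((1 : ℝ) / 3 + (1 / 3 + -2 / 3)) * y ^ ((2 : ℝ) / 3 + (2 / 3 + 2 / 3)) := by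
        norm_num
    _ = _ := by
        rw [rpow_add hx, rpow_add hx, rpow_add hy, rpow_add hy]
        ring

theorem div_le_sqrt_of_sqrt_le {k c : ℝ} (hk : 0 ≤ k) (hc : 0 < c) (h : √k ≤ c) :
    k / c ≤ √k := by
  rw [div_le_iff₀ hc]
  calc k = √k * √k := (mul_self_sqrt hk).symm
    _ ≤ √k * c := mul_le_mul_of_nonneg_left h (sqrt_nonneg k)

end Real

/-- Competitive ratio with maximum distance `d`: with `T = d^{−4/3} n^{4/3}`,
`t = d^{1/3} n^{2/3}`, `1 ≤ d ≤ n`, `OPT ≥ 1` and `OPT ≥ √k`: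
if `k < T` then `d·k/OPT ≤ d·√k ≤ d^{1/3} n^{2/3}`; if `k ≥ T` then
`OPT ≥ d^{−2/3} n^{2/3}` and
`(t·OPT + n²/t)/OPT ≤ t + n²/(t·OPT) ≤ 2·d^{1/3} n^{2/3}`. -/
theorem stmt18 (n d k : ℕ) (hd : 1 ≤ d) (hdn : d ≤ n)
    (OPT : ℝ) (hOPT : 1 ≤ OPT) (hcount : Real.sqrt k ≤ OPT) :
    (((k : ℝ) < (d : ℝ) ^ (-(4 : ℝ) / 3) * (n : ℝ) ^ ((4 : ℝ) / 3) →
      (d : ℝ) * k / OPT ≤ (d : ℝ) * Real.sqrt k ∧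
      (d : ℝ) * Real.sqrt k ≤ (d : ℝ) ^ ((1 : ℝ) / 3) * (n : ℝ) ^ ((2 : ℝ) / 3))) ∧
    (((d : ℝ) ^ (-(4 : ℝ) / 3) * (n : ℝ) ^ ((4 : ℝ) / 3) ≤ (k : ℝ) →
      (d : ℝ) ^ (-(2 : ℝ) / 3) * (n : ℝ) ^ ((2 : ℝ) / 3) ≤ OPT ∧
      ((d : ℝ) ^ ((1 : ℝ) / 3) * (n : ℝ) ^ ((2 : ℝ) / 3) * OPT +
          (n : ℝ) ^ 2 / ((d : ℝ) ^ ((1 : ℝ) / 3) * (n : ℝ) ^ ((2 : ℝ) / 3))) / OPT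
        = (d : ℝ) ^ ((1 : ℝ) / 3) * (n : ℝ) ^ ((2 : ℝ) / 3) +
          (n : ℝ) ^ 2 / ((d : ℝ) ^ ((1 : ℝ) / 3) * (n : ℝ) ^ ((2 : ℝ) / 3) * OPT) ∧
      (d : ℝ) ^ ((1 : ℝ) / 3) * (n : ℝ) ^ ((2 : ℝ) / 3) +
          (n : ℝ) ^ 2 / ((d : ℝ) ^ ((1 : ℝ) / 3) * (n : ℝ) ^ ((2 : ℝ) / 3) * OPT)
        ≤ 2 * ((d : ℝ) ^ ((1 : ℝ) / 3) * (n : ℝ) ^ ((2 : ℝ) / 3)))) := by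
  have hd₀ : (0 : ℝ) < d := by exact_mod_cast hd
  have hn₀ : (0 : ℝ) < n := by exact_mod_cast hd.trans hdn
  have hOPT₀ : 0 < OPT := one_pos.trans_le hOPT
  have hsqrtT := Real.sqrt_rpow_neg_four_thirds_mul_rpow_four_thirds hd₀.le hn₀.le
  refine ⟨fun hk => ⟨?_, ?_⟩, fun hk => ?_⟩
  · rw [mul_div_assoc]
    exact mul_le_mul_of_nonneg_left (Real.div_le_sqrt_of_sqrt_le k.cast_nonneg hOPT₀ hcount) hd₀.le
  · rw [← Real.mul_rpow_neg_two_thirds_mul hd₀.le, ← hsqrtT]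
    exact mul_le_mul_of_nonneg_left (Real.sqrt_le_sqrt hk.le) hd₀.le
  · have hs : (d : ℝ) ^ (-(2 : ℝ) / 3) * (n : ℝ) ^ ((2 : ℝ) / 3) ≤ OPT :=
      hsqrtT ▸ (Real.sqrt_le_sqrt hk).trans hcount
    refine ⟨hs, by rw [add_div, mul_div_cancel_right₀ _ hOPT₀.ne', div_div], ?_⟩
    have hquot : (n : ℝ) ^ 2 / ((d : ℝ) ^ ((1 : ℝ) / 3) * (n : ℝ) ^ ((2 : ℝ) / 3) * OPT)
        ≤ (d : ℝ) ^ ((1 : ℝ) / 3) * (n : ℝ) ^ ((2 : ℝ) / 3) :=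
      calc _ ≤ (n : ℝ) ^ 2 / ((d : ℝ) ^ ((1 : ℝ) / 3) * (n : ℝ) ^ ((2 : ℝ) / 3) *
              ((d : ℝ) ^ (-(2 : ℝ) / 3) * (n : ℝ) ^ ((2 : ℝ) / 3))) := by gcongr
        _ = _ := Real.sq_div_rpow_one_third_mul_rpow_neg_two_thirds hd₀ hn₀
    linarith
end
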